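/- arXiv:1904.03599 — 3 statements merged into one kernel-verified Lean document; each statement's English description precedes it below -/
import Mathlib

section
/- Let A and B be nontrivial groups and identify A and B with their images in the free product A ∗ B. Then for all x, y ∈ A ∗ B, the subgroup of A ∗ B generated by xAx⁻¹ and yBy⁻¹ equals the whole group A ∗ B if and only if the cosets xA and yB have nonempty intersection. (This is the algebraic characterization of adjacency of the vertices xA and yB in the Bass–Serre tree of A ∗ B.) -/
/-!
If `xA` and `yB` share a point `z`, both conjugates are conjugates by `z`, and `A ⊔ B` is
everything. Conversely, conjugating by `x⁻¹` reduces to `A ⊔ gBg⁻¹ = ⊤` with `g = x⁻¹y`, and we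
show `g ∈ AB`. Stripping a leading letter from `A` or a trailing letter from `B` off the reduced
word of `g` does not change this subgroup up to conjugation, so we may assume that `g ≠ 1` begins
outside `A` and ends outside `B`. Then ping-pong on reduced words, with `A` sending words into
those beginning in `A` and `gBg⁻¹` into those beginning with `g` followed by a letter of `B`,
shows that the orbit of the empty word under `A ⊔ gBg⁻¹` misses the word of `g`; so
`g ∉ A ⊔ gBg⁻¹`.
-/

open scoped Pointwise

namespace Subgroup

variable {G : Type*} [Group G]

theorem conj_smul_sup_eq_top_iff (x y : G) (K L : Subgroup G) :
    MulAut.conj x • K ⊔ MulAut.conj y • L = ⊤ ↔ K ⊔ MulAut.conj (x⁻¹ * y) • L = ⊤ := by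
  conv_rhs => rw [← smul_left_cancel_iff (MulAut.conj x)]
  rw [smul_sup, ← mul_smul, ← map_mul, mul_inv_cancel_left, conj_smul_eq_self_of_mem (mem_top x)]

theorem sup_conj_smul_eq_top_iff_of_mem {K L : Subgroup G} {k l : G} (hk : k ∈ K) (hl : l ∈ L)
    (g : G) : K ⊔ MulAut.conj (k * g * l) • L = ⊤ ↔ K ⊔ MulAut.conj g • L = ⊤ := by
  rw [map_mul, mul_smul, conj_smul_eq_self_of_mem hl]
  conv_lhs => rw [← conj_smul_eq_self_of_mem hk, conj_smul_sup_eq_top_iff, inv_mul_cancel_left]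

theorem map_conj_smul {N F : Type*} [Group N] [FunLike F G N] [MonoidHomClass F G N] (f : F) (g : G)
    (K : Subgroup G) :
    (MulAut.conj g • K).map (f : G →* N) = MulAut.conj (f g) • K.map (f : G →* N) := by
  change (K.map (MulAut.conj g).toMonoidHom).map (f : G →* N) =
    (K.map (f : G →* N)).map (MulAut.conj (f g)).toMonoidHom
  rw [map_map, map_map]
  congr 1
  ext
  simp

end Subgroup

namespace Monoid.CoprodI

section Word

variable {ι : Type*} {M : ι → Type*} [∀ i, Group (M i)]

theorem NeWord.fstIdx_toWord {i j : ι} (w : NeWord M i j) : w.toWord.fstIdx = some i := by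
  simp [Word.fstIdx, toWord]

theorem NeWord.length_toList_inv {i j : ι} (w : NeWord M i j) :
    w.inv.toList.length = w.toList.length := by
  induction w <;> simp [inv, *, add_comm]

theorem Word.exists_prod_eq_of_mul_prod {i : ι} {w : Word M} (hw : w.fstIdx = some i) :
    ∃ (a : M i) (w' : Word M), w.prod = of a * w'.prod ∧ w'.toList.length < w.toList.length := by
  induction w using Word.consRecOn with
  | empty => simp [Word.fstIdx] at hw
  | cons k m w' h1 h2 =>
    obtain rfl : k = i := by simpa using hw
    exact ⟨m, w', Word.prod_cons .., by simp⟩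

variable [DecidableEq ι] [∀ i, DecidableEq (M i)]

@[simp]
theorem Word.equiv_prod (w : Word M) : Word.equiv w.prod = w :=
  Word.equiv.apply_symm_apply w

@[simp]
theorem Word.prod_equiv (g : CoprodI M) : (Word.equiv g).prod = g :=
  Word.equiv.symm_apply_apply g

theorem eq_one_or_exists_neWord_prod_eq (g : CoprodI M) :
    g = 1 ∨ ∃ (i j : ι) (w : NeWord M i j), w.prod = g := by
  rcases eq_or_ne (Word.equiv g) .empty with hg | hg
  · left
    rw [← Word.prod_equiv g, hg, Word.prod_empty]
  · obtain ⟨i, j, w, hw⟩ := NeWord.of_word _ hg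
    exact Or.inr ⟨i, j, w, by rw [NeWord.prod, hw, Word.prod_equiv]⟩

namespace NeWord

theorem equiv_prod {i j : ι} (w : NeWord M i j) : Word.equiv w.prod = w.toWord :=
  Word.equiv_prod w.toWord

theorem prod_smul_toWord {i j k l : ι} (u : NeWord M i j) (hne : j ≠ k) (v : NeWord M k l) :
    u.prod • v.toWord = (u.append hne v).toWord :=
  Word.equiv.symm.injective <| by
    change (u.prod • v.toWord).prod = (u.append hne v).prod
    rw [Word.prod_smul, append_prod]
    rfl

theorem fstIdx_prod_smul {i j : ι} (u : NeWord M i j) {w : Word M} (hw : w.fstIdx ≠ some j) :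
    (u.prod • w).fstIdx = some i := by
  rcases eq_or_ne w .empty with rfl | hne
  · change (Word.equiv u.prod).fstIdx = _
    rw [equiv_prod, fstIdx_toWord]
  · obtain ⟨k, l, v, rfl⟩ := of_word w hne
    rw [fstIdx_toWord] at hw
    rw [prod_smul_toWord u (fun h => hw (h ▸ rfl)) v, fstIdx_toWord]

end NeWord

theorem Word.length_toList_equiv_inv (g : CoprodI M) :
    (Word.equiv g⁻¹).toList.length = (Word.equiv g).toList.length := by
  obtain rfl | ⟨i, j, w, rfl⟩ := eq_one_or_exists_neWord_prod_eq g
  · simp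
  rw [← NeWord.inv_prod, NeWord.equiv_prod, NeWord.equiv_prod]
  exact NeWord.length_toList_inv w

end Word

theorem smul_mem_of_mem_iSup_of_ping_pong {ι G α : Type*} [Nontrivial ι] [Group G]
    [MulAction G α] {K : ι → Subgroup G} {X : ι → Set α} {x₀ : α}
    (hpp : Pairwise fun i j => ∀ h ∈ K i, h ≠ 1 → h • insert x₀ (X j) ⊆ X i)
    {g : G} (hg : g ∈ ⨆ i, K i) : g • x₀ ∈ insert x₀ (⋃ i, X i) := by
  classical
  let f : ∀ i, K i →* G := fun i => (K i).subtype
  obtain ⟨w, rfl⟩ : g ∈ (lift f).range := by simpa [f, range_eq_iSup] using hg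
  obtain rfl | ⟨i, j, w, rfl⟩ := eq_one_or_exists_neWord_prod_eq w
  · simp
  obtain ⟨k, hkj⟩ := exists_ne j
  have hpp' : Pairwise fun i j => ∀ h : K i, h ≠ 1 →
      f i h • insert x₀ (X j) ⊆ insert x₀ (X i) := fun i j hij h hh =>
    (hpp hij h h.2 (by simpa using hh)).trans (Set.subset_insert _ _)
  have := lift_word_ping_pong f _ hpp' w hkj.symm (Set.smul_mem_smul_set (Set.mem_insert x₀ _))
  exact Set.insert_subset_insert (Set.subset_iUnion X i) this

variable {ι : Type*} {M : ι → Type*} [∀ i, Group (M i)] [DecidableEq ι] [∀ i, DecidableEq (M i)]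

theorem NeWord.prod_notMem_sup_conj_smul {i j k l : ι} (γ : NeWord M k l) (hki : k ≠ i)
    (hlj : l ≠ j) :
    γ.prod ∉ (of : M i →* _).range ⊔ MulAut.conj γ.prod • (of : M j →* _).range := by
  let S : ι → Set (Word M) := fun i => {w | w.fstIdx = some i}
  have hpp : Pairwise fun b c : Bool =>
      ∀ h ∈ cond b (of : M i →* _).range (MulAut.conj γ.prod • (of : M j →* _).range), h ≠ 1 →
        h • insert Word.empty (cond c (S i) (γ.prod • S j)) ⊆ cond b (S i) (γ.prod • S j) := by
    rintro (_ | _) (_ | _) hbc h hh h1 <;> simp only [ne_eq, not_true_eq_false] at hbc <;>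
      rw [Set.smul_set_subset_iff] <;> rintro w hw
    · obtain ⟨_, ⟨β, rfl⟩, rfl⟩ := (Subgroup.mem_smul_pointwise_iff_exists _ _ _).mp hh
      have hβ : β ≠ 1 := by rintro rfl; simp at h1
      have hw' : w.fstIdx ≠ some k := by
        rcases hw with rfl | hw
        · simp [Word.fstIdx]
        · exact hw.symm ▸ fun h => hki (Option.some_injective _ h).symm
      have : (MulAut.conj γ.prod • of β) • w = γ.prod • (singleton β hβ).prod • γ.inv.prod • w := by
        simp [mul_smul]
      rw [this]
      refine Set.smul_mem_smul_set (fstIdx_prod_smul _ ?_)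
      rw [fstIdx_prod_smul γ.inv hw']
      exact fun h => hlj (Option.some_injective _ h)
    · obtain ⟨a, rfl⟩ := hh
      have ha : a ≠ 1 := by rintro rfl; simp at h1
      rw [← prod_singleton a ha]
      refine fstIdx_prod_smul _ ?_
      rcases hw with rfl | ⟨w, hw, rfl⟩
      · simp [Word.fstIdx]
      · rw [fstIdx_prod_smul γ (hw.symm ▸ fun h => hlj (Option.some_injective _ h).symm)]
        exact fun h => hki (Option.some_injective _ h)
  intro hmem
  have hγ : (γ.prod • Word.empty).fstIdx = some k := fstIdx_prod_smul γ (by simp [Word.fstIdx])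
  have := smul_mem_of_mem_iSup_of_ping_pong hpp (by rwa [iSup_bool_eq])
  simp only [Set.mem_insert_iff, Set.mem_iUnion, Bool.exists_bool, cond, Set.smul_mem_smul_set_iff,
    Set.mem_ofPred_eq, S] at this
  rcases this with h | h | h
  · simp [h, Word.fstIdx] at hγ
  · simp [Word.fstIdx] at h
  · exact hki (Option.some_injective _ (hγ.symm.trans h))

theorem exists_eq_of_mul_of_of_sup_conj_smul_eq_top {i j : ι} (g : CoprodI M)
    (h : (of : M i →* _).range ⊔ MulAut.conj g • (of : M j →* _).range = ⊤) :
    ∃ (a : M i) (b : M j), g = of a * of b := by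
  induction hn : (Word.equiv g).toList.length using Nat.strong_induction_on generalizing g with
  | _ n ih =>
  subst hn
  by_cases hi : (Word.equiv g).fstIdx = some i
  · obtain ⟨a, w, hg, hw⟩ := Word.exists_prod_eq_of_mul_prod hi
    rw [Word.prod_equiv] at hg
    have h' := (Subgroup.sup_conj_smul_eq_top_iff_of_mem (MonoidHom.mem_range.mpr ⟨a, rfl⟩)
      (one_mem _) w.prod).mp (by rwa [mul_one, ← hg])
    obtain ⟨a', b, hab⟩ := ih _ (by rwa [Word.equiv_prod]) w.prod h' rfl
    exact ⟨a * a', b, by rw [hg, hab, map_mul, mul_assoc]⟩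
  by_cases hj : (Word.equiv g⁻¹).fstIdx = some j
  · obtain ⟨b, w, hg, hw⟩ := Word.exists_prod_eq_of_mul_prod hj
    rw [Word.prod_equiv, inv_eq_iff_eq_inv, mul_inv_rev, ← map_inv] at hg
    have h' := (Subgroup.sup_conj_smul_eq_top_iff_of_mem (one_mem _)
      (MonoidHom.mem_range.mpr ⟨b⁻¹, rfl⟩) w.prod⁻¹).mp (by rwa [one_mul, ← hg])
    obtain ⟨a, b', hab⟩ := ih _ (by rwa [Word.length_toList_equiv_inv, Word.equiv_prod,
      ← Word.length_toList_equiv_inv g]) _ h' rfl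
    exact ⟨a, b' * b⁻¹, by rw [hg, hab, map_mul, mul_assoc]⟩
  obtain rfl | ⟨k, l, γ, rfl⟩ := eq_one_or_exists_neWord_prod_eq g
  · exact ⟨1, 1, by simp⟩
  rw [NeWord.equiv_prod, NeWord.fstIdx_toWord] at hi
  rw [← NeWord.inv_prod, NeWord.equiv_prod, NeWord.fstIdx_toWord] at hj
  exact absurd (h ▸ Subgroup.mem_top _)
    (γ.prod_notMem_sup_conj_smul (fun h => hi (h ▸ rfl)) (fun h => hj (h ▸ rfl)))

end Monoid.CoprodI

namespace Monoid.Coprod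

/-- The factors of `A ∗ B` as subgroups, so that `A ∗ B` is a free product of a `Bool`-indexed
family in one universe and the normal forms of `Monoid.CoprodI` apply. -/
abbrev factors (A B : Type*) [Group A] [Group B] (b : Bool) : Subgroup (Coprod A B) :=
  cond b (inl : A →* Coprod A B).range (inr : B →* Coprod A B).range

variable {A B : Type*} [Group A] [Group B]

def equivCoprodI : Coprod A B ≃* CoprodI fun b => factors A B b :=
  MonoidHom.toMulEquiv
    (lift ((CoprodI.of (i := true)).comp (inl : A →* Coprod A B).rangeRestrict)
      ((CoprodI.of (i := false)).comp (inr : B →* Coprod A B).rangeRestrict))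
    (CoprodI.lift fun b => (factors A B b).subtype)
    (by ext <;> simp)
    (by
      refine CoprodI.ext_hom _ _ fun b => ?_
      cases b <;> ext ⟨_, c, rfl⟩ <;> rfl)

theorem map_equivCoprodI_factors (b : Bool) :
    (factors A B b).map (equivCoprodI (A := A) (B := B) : Coprod A B →* _) =
      (CoprodI.of (M := fun b => factors A B b) (i := b)).range := by
  rw [← Subgroup.map_symm_eq_iff_map_eq, MonoidHom.map_range]
  exact (congrArg MonoidHom.range (CoprodI.lift_comp_of (fun b => (factors A B b).subtype) b)).trans
    (factors A B b).range_subtype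

theorem range_inl_sup_conj_smul_range_inr_eq_top_iff (g : Coprod A B) :
    (inl : A →* Coprod A B).range ⊔ MulAut.conj g • (inr : B →* Coprod A B).range = ⊤ ↔
      ∃ a b, g = inl a * inr b := by
  constructor
  · intro h
    classical
    have h' : (CoprodI.of (M := fun b => factors A B b) (i := true)).range ⊔
        MulAut.conj (equivCoprodI g) • (CoprodI.of (M := fun b => factors A B b) (i := false)).range
          = ⊤ := by
      rw [← map_equivCoprodI_factors, ← map_equivCoprodI_factors, ← Subgroup.map_conj_smul,
        ← Subgroup.map_sup]
      exact (congrArg _ h).trans (Subgroup.map_top_of_surjective _ equivCoprodI.surjective)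
    obtain ⟨⟨_, a, rfl⟩, ⟨_, b, rfl⟩, hab⟩ :=
      CoprodI.exists_eq_of_mul_of_of_sup_conj_smul_eq_top _ h'
    exact ⟨a, b, equivCoprodI.injective (by rw [hab, map_mul]; rfl)⟩
  · rintro ⟨a, b, rfl⟩
    rw [← mul_one (inl a), Subgroup.sup_conj_smul_eq_top_iff_of_mem
      (MonoidHom.mem_range.mpr ⟨a, rfl⟩) (MonoidHom.mem_range.mpr ⟨b, rfl⟩), map_one, one_smul,
      range_inl_sup_range_inr]

end Monoid.Coprod

theorem conj_sup_eq_top_iff_cosets_meet_general {A B : Type*} [Group A] [Group B]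
    (x y : Monoid.Coprod A B) :
    (Subgroup.map (MulAut.conj x).toMonoidHom
        (Monoid.Coprod.inl : A →* Monoid.Coprod A B).range ⊔
      Subgroup.map (MulAut.conj y).toMonoidHom
        (Monoid.Coprod.inr : B →* Monoid.Coprod A B).range = ⊤) ↔
      ((fun a => x * a) ''
          ((Monoid.Coprod.inl : A →* Monoid.Coprod A B).range : Set (Monoid.Coprod A B)) ∩
        (fun b => y * b) ''
          ((Monoid.Coprod.inr : B →* Monoid.Coprod A B).range : Set (Monoid.Coprod A B))).Nonempty := by
  refine (Subgroup.conj_smul_sup_eq_top_iff x y _ _).trans ?_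
  rw [Monoid.Coprod.range_inl_sup_conj_smul_range_inr_eq_top_iff]
  constructor
  · rintro ⟨a, b, hab⟩
    refine ⟨x * .inl a, ⟨_, ⟨a, rfl⟩, rfl⟩, .inr b⁻¹, ⟨b⁻¹, rfl⟩, ?_⟩
    rw [inv_mul_eq_iff_eq_mul] at hab
    simp [hab, mul_assoc]
  · rintro ⟨z, ⟨_, ⟨a, rfl⟩, rfl⟩, _, ⟨b, rfl⟩, hz⟩
    refine ⟨a, b⁻¹, ?_⟩
    rw [inv_mul_eq_iff_eq_mul, map_inv, ← mul_assoc, eq_mul_inv_iff_mul_eq]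
    exact hz

/-- Algebraic characterization of adjacency in the Bass–Serre tree of `A ∗ B`: the subgroup
generated by `xAx⁻¹` and `yBy⁻¹` is the whole free product iff the cosets `xA` and `yB` meet. -/
theorem conj_sup_eq_top_iff_cosets_meet {A B : Type*} [Group A] [Group B]
    [Nontrivial A] [Nontrivial B] (x y : Monoid.Coprod A B) :
    (Subgroup.map (MulAut.conj x).toMonoidHom
        (Monoid.Coprod.inl : A →* Monoid.Coprod A B).range ⊔
      Subgroup.map (MulAut.conj y).toMonoidHom
        (Monoid.Coprod.inr : B →* Monoid.Coprod A B).range = ⊤) ↔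
      ((fun a => x * a) ''
          ((Monoid.Coprod.inl : A →* Monoid.Coprod A B).range : Set (Monoid.Coprod A B)) ∩
        (fun b => y * b) ''
          ((Monoid.Coprod.inr : B →* Monoid.Coprod A B).range : Set (Monoid.Coprod A B))).Nonempty :=
  conj_sup_eq_top_iff_cosets_meet_general x y
end

section
/- Let A and B be groups, let s₁,…,sₙ be a generating set of A and r₁,…,rₙ a generating set of B (n ≥ 1), with every sᵢ and every rᵢ nontrivial. Identify A and B with their images in the free product A ∗ B and set g := s₁r₁·s₂r₂ ⋯ sₙrₙ ∈ A ∗ B. If φ is an automorphism of A ∗ B satisfying φ(A) = A and φ(B) = B (as subgroups) and φ(g) = g, then φ is the identity automorphism. -/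
/-!
Write `φ(sᵢ) = aᵢ` and `φ(rᵢ) = bᵢ`; since `φ` preserves both factors and is injective, the `aᵢ`
lie in `A`, the `bᵢ` in `B`, and all are nontrivial. Then `a₁b₁⋯aₙbₙ = φ(g) = g = s₁r₁⋯sₙrₙ` are two
reduced words for the same element, so by uniqueness of normal forms in a free product `aᵢ = sᵢ`
and `bᵢ = rᵢ`. Thus `φ` fixes a generating set of `A ∗ B`.
-/

universe u v

namespace Monoid.Coprod

variable {A : Type u} {B : Type v}

/-- The two factors as a `Bool`-indexed family in a common universe, so that the normal forms of
`Monoid.CoprodI` apply to `A ∗ B`. -/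
abbrev boolFamily (A : Type u) (B : Type v) : Bool → Type (max u v) :=
  fun b => cond b (ULift.{max u v} B) (ULift.{max u v} A)

def alternatingLetters (l : List (A × B)) : List (Σ b, boolFamily A B b) :=
  l.flatMap fun p => [⟨false, ULift.up p.1⟩, ⟨true, ULift.up p.2⟩]

theorem alternatingLetters_injective :
    Function.Injective (alternatingLetters : List (A × B) → _)
  | [], [], _ => rfl
  | [], _ :: _, h | _ :: _, [], h => by simp [alternatingLetters] at h
  | p :: l, q :: l', h => by
    simp only [alternatingLetters, List.flatMap_cons, List.cons_append, List.nil_append,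
      List.cons.injEq, Sigma.mk.injEq, heq_eq_eq, true_and] at h
    obtain ⟨h₁, h₂, h⟩ := h
    rw [Prod.ext (congrArg ULift.down h₁) (congrArg ULift.down h₂),
      alternatingLetters_injective h]

theorem alternatingLetters_isChain (l : List (A × B)) :
    (alternatingLetters l).IsChain fun x y => x.1 ≠ y.1 := by
  induction l with
  | nil => simp [alternatingLetters]
  | cons p l ih =>
    rcases l with _ | ⟨q, l⟩
    · simp [alternatingLetters]
    · simp only [alternatingLetters, List.flatMap_cons, List.cons_append,
        List.nil_append] at ih ⊢
      exact .cons_cons (by simp) (.cons_cons (by simp) ih)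

variable [Group A] [Group B]

instance : ∀ b, Group (boolFamily A B b)
  | false => inferInstanceAs (Group (ULift A))
  | true => inferInstanceAs (Group (ULift B))

noncomputable def toCoprodI : Coprod A B →* CoprodI (boolFamily A B) :=
  lift ((CoprodI.of (i := false)).comp MulEquiv.ulift.symm.toMonoidHom)
    ((CoprodI.of (i := true)).comp MulEquiv.ulift.symm.toMonoidHom)

@[simp]
theorem toCoprodI_inl (x : A) : toCoprodI (inl x : Coprod A B) = CoprodI.of (i := false) ⟨x⟩ :=
  rfl

@[simp]
theorem toCoprodI_inr (y : B) : toCoprodI (inr y : Coprod A B) = CoprodI.of (i := true) ⟨y⟩ :=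
  rfl

def alternatingWord (l : List (A × B)) (hl : ∀ p ∈ l, p.1 ≠ 1 ∧ p.2 ≠ 1) :
    CoprodI.Word (boolFamily A B) where
  toList := alternatingLetters l
  ne_one := by
    simp only [alternatingLetters, List.mem_flatMap, List.mem_cons, List.not_mem_nil, or_false]
    rintro _ ⟨p, hp, rfl | rfl⟩ h
    exacts [(hl p hp).1 (congrArg ULift.down h), (hl p hp).2 (congrArg ULift.down h)]
  chain_ne := alternatingLetters_isChain l

theorem alternatingWord_prod (l : List (A × B)) (hl : ∀ p ∈ l, p.1 ≠ 1 ∧ p.2 ≠ 1) :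
    (alternatingWord l hl).prod = toCoprodI (l.map fun p => inl p.1 * inr p.2).prod := by
  induction l with
  | nil => simp [alternatingWord, alternatingLetters, CoprodI.Word.prod]
  | cons p l ih =>
    have ih := ih fun q hq => hl q (List.mem_cons_of_mem _ hq)
    simp only [alternatingWord, alternatingLetters, CoprodI.Word.prod, List.flatMap_cons,
      List.map_append, List.prod_append] at ih ⊢
    simp [ih, mul_assoc]

/-- Uniqueness of the normal form `a₁b₁⋯aₙbₙ` in `A ∗ B`. -/
theorem eq_of_prod_map_inl_mul_inr_eq {l l' : List (A × B)}
    (hl : ∀ p ∈ l, p.1 ≠ 1 ∧ p.2 ≠ 1) (hl' : ∀ p ∈ l', p.1 ≠ 1 ∧ p.2 ≠ 1)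
    (h : (l.map fun p => inl p.1 * inr p.2).prod = (l'.map fun p => inl p.1 * inr p.2).prod) :
    l = l' := by
  classical
  have hw : alternatingWord l hl = alternatingWord l' hl' :=
    CoprodI.Word.equiv.symm.injective <| by
      simp only [CoprodI.Word.equiv, Equiv.coe_fn_symm_mk, alternatingWord_prod, h]
  exact alternatingLetters_injective (congrArg CoprodI.Word.toList hw)

theorem eq_of_prod_ofFn_inl_mul_inr_eq {n : ℕ} {a a' : Fin n → A} {b b' : Fin n → B}
    (ha : ∀ i, a i ≠ 1) (hb : ∀ i, b i ≠ 1) (ha' : ∀ i, a' i ≠ 1) (hb' : ∀ i, b' i ≠ 1)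
    (h : (List.ofFn fun i => inl (a i) * inr (b i)).prod =
      (List.ofFn fun i => inl (a' i) * inr (b' i)).prod) :
    a = a' ∧ b = b' := by
  have hl : (List.ofFn fun i => (a i, b i)) = List.ofFn fun i => (a' i, b' i) :=
    eq_of_prod_map_inl_mul_inr_eq (by simpa using fun i => ⟨ha i, hb i⟩)
      (by simpa using fun i => ⟨ha' i, hb' i⟩) (by simpa [List.map_ofFn, Function.comp_def])
  simp only [List.ofFn_inj, funext_iff, Prod.mk.injEq] at hl
  exact ⟨funext fun i => (hl i).1, funext fun i => (hl i).2⟩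

theorem mulAut_eq_refl_of_apply_generators {ι κ : Type*} {s : ι → A} {r : κ → B}
    (hs : Subgroup.closure (Set.range s) = ⊤) (hr : Subgroup.closure (Set.range r) = ⊤)
    (φ : MulAut (Coprod A B)) (hφs : ∀ i, φ (inl (s i)) = inl (s i))
    (hφr : ∀ i, φ (inr (r i)) = inr (r i)) :
    φ = MulEquiv.refl _ := by
  have hA : φ.toMonoidHom.comp inl = inl :=
    MonoidHom.eq_of_eqOn_dense hs (by rintro _ ⟨i, rfl⟩; exact hφs i)
  have hB : φ.toMonoidHom.comp inr = inr :=
    MonoidHom.eq_of_eqOn_dense hr (by rintro _ ⟨i, rfl⟩; exact hφr i)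
  have h : φ.toMonoidHom = MonoidHom.id _ := hom_ext hA hB
  exact MulEquiv.ext fun x => DFunLike.congr_fun h x

end Monoid.Coprod

open Monoid in
theorem aut_fixing_factors_and_g_is_id_general {A B : Type*} [Group A] [Group B]
    (n : ℕ) (s : Fin n → A) (r : Fin n → B)
    (hs1 : ∀ i, s i ≠ 1) (hr1 : ∀ i, r i ≠ 1)
    (hsgen : Subgroup.closure (Set.range s) = (⊤ : Subgroup A))
    (hrgen : Subgroup.closure (Set.range r) = (⊤ : Subgroup B))
    (g : Monoid.Coprod A B)
    (hg : g = (List.ofFn fun i => Monoid.Coprod.inl (s i) * Monoid.Coprod.inr (r i)).prod)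
    (φ : MulAut (Monoid.Coprod A B))
    (hA : Subgroup.map φ.toMonoidHom (Monoid.Coprod.inl : A →* Monoid.Coprod A B).range =
      (Monoid.Coprod.inl : A →* Monoid.Coprod A B).range)
    (hB : Subgroup.map φ.toMonoidHom (Monoid.Coprod.inr : B →* Monoid.Coprod A B).range =
      (Monoid.Coprod.inr : B →* Monoid.Coprod A B).range)
    (hfix : φ g = g) :
    φ = MulEquiv.refl (Monoid.Coprod A B) := by
  choose a ha using fun i => hA.le (Subgroup.mem_map_of_mem φ.toMonoidHom ⟨s i, rfl⟩)
  choose b hb using fun i => hB.le (Subgroup.mem_map_of_mem φ.toMonoidHom ⟨r i, rfl⟩)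
  simp only [MulEquiv.coe_toMonoidHom] at ha hb
  have ha1 : ∀ i, a i ≠ 1 := fun i h =>
    hs1 i <| Coprod.inl_injective <| φ.injective <| by rw [← ha i, h, map_one, map_one]
  have hb1 : ∀ i, b i ≠ 1 := fun i h =>
    hr1 i <| Coprod.inr_injective <| φ.injective <| by rw [← hb i, h, map_one, map_one]
  obtain ⟨rfl, rfl⟩ := Coprod.eq_of_prod_ofFn_inl_mul_inr_eq ha1 hb1 hs1 hr1 <| by
    rw [← hg, ← hfix, hg, map_list_prod, List.map_ofFn]
    simp [Function.comp_def, ha, hb]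
  exact Coprod.mulAut_eq_refl_of_apply_generators hsgen hrgen φ (fun i => (ha i).symm)
    fun i => (hb i).symm

/-- An automorphism of `A ∗ B` stabilizing `A` and `B` setwise and fixing the alternating
product `g = s₁r₁⋯sₙrₙ` of nontrivial generators is the identity. -/
theorem aut_fixing_factors_and_g_is_id {A B : Type*} [Group A] [Group B]
    (n : ℕ) (hn : 1 ≤ n) (s : Fin n → A) (r : Fin n → B)
    (hs1 : ∀ i, s i ≠ 1) (hr1 : ∀ i, r i ≠ 1)
    (hsgen : Subgroup.closure (Set.range s) = (⊤ : Subgroup A))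
    (hrgen : Subgroup.closure (Set.range r) = (⊤ : Subgroup B))
    (g : Monoid.Coprod A B)
    (hg : g = (List.ofFn fun i => Monoid.Coprod.inl (s i) * Monoid.Coprod.inr (r i)).prod)
    (φ : MulAut (Monoid.Coprod A B))
    (hA : Subgroup.map φ.toMonoidHom (Monoid.Coprod.inl : A →* Monoid.Coprod A B).range =
      (Monoid.Coprod.inl : A →* Monoid.Coprod A B).range)
    (hB : Subgroup.map φ.toMonoidHom (Monoid.Coprod.inr : B →* Monoid.Coprod A B).range =
      (Monoid.Coprod.inr : B →* Monoid.Coprod A B).range)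
    (hfix : φ g = g) :
    φ = MulEquiv.refl (Monoid.Coprod A B) :=
  aut_fixing_factors_and_g_is_id_general n s r hs1 hr1 hsgen hrgen g hg φ hA hB hfix
end

section
/- Let Γ be a finite simplicial graph. Every vertex of Γ is non-adjacent to at most one other vertex if and only if there exist natural numbers a and b such that C_Γ is isomorphic to the direct product of a copies of the cyclic group of order 2 and b copies of the infinite dihedral group. -/
/-- The set of commutation relators defining a graph product. -/
def graphProdRels {V : Type*} (Γ : SimpleGraph V) (G : V → Type*) [∀ w, Group (G w)] :
    Set (Monoid.CoprodI G) :=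
  {x | ∃ (u v : V) (_ : Γ.Adj u v) (g : G u) (h : G v),
    x = Monoid.CoprodI.of g * Monoid.CoprodI.of h *
      (Monoid.CoprodI.of g)⁻¹ * (Monoid.CoprodI.of h)⁻¹}

/-- The graph product of the family of groups `G` over the simplicial graph `Γ`. -/
def GraphProduct {V : Type*} (Γ : SimpleGraph V) (G : V → Type*) [∀ w, Group (G w)] :=
  Monoid.CoprodI G ⧸ Subgroup.normalClosure (graphProdRels Γ G)

instance {V : Type*} (Γ : SimpleGraph V) (G : V → Type*) [∀ w, Group (G w)] :
    Group (GraphProduct Γ G) :=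
  inferInstanceAs (Group (Monoid.CoprodI G ⧸ Subgroup.normalClosure (graphProdRels Γ G)))

/-- The canonical map from a vertex group into the graph product. -/
def GraphProduct.of {V : Type*} (Γ : SimpleGraph V) (G : V → Type*) [∀ w, Group (G w)]
    (u : V) : G u →* GraphProduct Γ G :=
  (QuotientGroup.mk' (Subgroup.normalClosure (graphProdRels Γ G))).comp Monoid.CoprodI.of

/-- The vertex subgroup of the graph product at the vertex `u`. -/
def vertexSubgroup {V : Type*} (Γ : SimpleGraph V) (G : V → Type*) [∀ w, Group (G w)]
    (u : V) : Subgroup (GraphProduct Γ G) :=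
  (GraphProduct.of Γ G u).range

/-- An automorphism of the graph product is conjugating if it sends each vertex subgroup to
a conjugate of a vertex subgroup. -/
def IsConjugating {V : Type*} (Γ : SimpleGraph V) (G : V → Type*) [∀ w, Group (G w)]
    (φ : MulAut (GraphProduct Γ G)) : Prop :=
  ∀ u : V, ∃ (v : V) (g : GraphProduct Γ G),
    Subgroup.map φ.toMonoidHom (vertexSubgroup Γ G u) =
      Subgroup.map (MulAut.conj g).toMonoidHom (vertexSubgroup Γ G v)

/-- An automorphism of the graph product is in `PConjAut` if it sends each vertex subgroup to
a conjugate of itself. -/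
def IsPConjugating {V : Type*} (Γ : SimpleGraph V) (G : V → Type*) [∀ w, Group (G w)]
    (φ : MulAut (GraphProduct Γ G)) : Prop :=
  ∀ u : V, ∃ g : GraphProduct Γ G,
    Subgroup.map φ.toMonoidHom (vertexSubgroup Γ G u) =
      Subgroup.map (MulAut.conj g).toMonoidHom (vertexSubgroup Γ G u)

/-- A vertex is universal if it is adjacent to every other vertex. -/
def IsUniversal {V : Type*} (Γ : SimpleGraph V) (u : V) : Prop :=
  ∀ v : V, v ≠ u → Γ.Adj u v

/-- Some vertex is non-adjacent to at least two other vertices. -/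
def HasVertexWithTwoNonNeighbors {V : Type*} (Γ : SimpleGraph V) : Prop :=
  ∃ u v w : V, v ≠ w ∧ v ≠ u ∧ w ≠ u ∧ ¬Γ.Adj u v ∧ ¬Γ.Adj u w

/-- A group `G` is SQ-universal if every countable group embeds into a quotient of `G`. -/
def SQUniversal (G : Type*) [Group G] : Prop :=
  ∀ (Q : Type) [Group Q] [Countable Q],
    ∃ (N : Subgroup G) (hN : N.Normal),
      haveI := hN
      ∃ f : Q →* G ⧸ N, Function.Injective f

/-- A quasimorphism on a group. -/
def IsQuasimorphism {H : Type*} [Group H] (f : H → ℝ) : Prop :=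
  ∃ C : ℝ, 0 ≤ C ∧ ∀ g h : H, |f (g * h) - f g - f h| ≤ C

/-- A homogeneous map on a group. -/
def IsHomogeneous {H : Type*} [Group H] (f : H → ℝ) : Prop :=
  ∀ (g : H) (k : ℤ), f (g ^ k) = (k : ℝ) * f g

/-- The space of homogeneous quasimorphisms of `H` is infinite-dimensional, expressed as: it is
not contained in the span of any finite set of functions. -/
def HasManyQuasimorphisms (H : Type*) [Group H] : Prop :=
  ¬ ∃ s : Finset (H → ℝ), ∀ f : H → ℝ, IsQuasimorphism f → IsHomogeneous f →
      f ∈ Submodule.span ℝ (s : Set (H → ℝ))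

/-- A group virtually has many quasimorphisms if some finite-index subgroup has an
infinite-dimensional space of homogeneous quasimorphisms. -/
def VirtuallyManyQuasimorphisms (G : Type*) [Group G] : Prop :=
  ∃ H : Subgroup G, H.FiniteIndex ∧ HasManyQuasimorphisms H

/-- A group is boundedly generated if it is the product of finitely many cyclic subgroups. -/
def BoundedlyGenerated (G : Type*) [Group G] : Prop :=
  ∃ l : List G, ∀ g : G, ∃ m : List ℤ, m.length = l.length ∧
    g = (List.zipWith (fun x (k : ℤ) => x ^ k) l m).prod

/-- A group is large if a finite-index subgroup surjects onto a nonabelian free group. -/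
def IsLarge (G : Type*) [Group G] : Prop :=
  ∃ H : Subgroup G, H.FiniteIndex ∧ ∃ f : H →* FreeGroup (Fin 2), Function.Surjective f

/-- A group is virtually free abelian if it has a finite-index subgroup isomorphic to `ℤⁿ`. -/
def VirtuallyFreeAbelian (G : Type*) [Group G] : Prop :=
  ∃ H : Subgroup G, H.FiniteIndex ∧ ∃ n : ℕ, Nonempty (H ≃* Multiplicative (Fin n → ℤ))

/-- The relators of a right-angled Coxeter group. -/
def racgRels {V : Type*} (Γ : SimpleGraph V) : Set (FreeGroup V) :=
  {w | (∃ v : V, w = FreeGroup.of v * FreeGroup.of v) ∨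
    ∃ u v : V, Γ.Adj u v ∧ w = (FreeGroup.of u * FreeGroup.of v) ^ 2}

/-- The right-angled Coxeter group of a simplicial graph. -/
def RACG {V : Type*} (Γ : SimpleGraph V) := PresentedGroup (racgRels Γ)

instance {V : Type*} (Γ : SimpleGraph V) : Group (RACG Γ) :=
  inferInstanceAs (Group (PresentedGroup (racgRels Γ)))

/-!
If every vertex has at most one non-neighbour, non-adjacency is an equivalence relation whose
classes have one or two elements, and `Γ` is the join of these classes. The right-angled Coxeter
group of a join is the product of the groups of its pieces, and the group of a single vertex, resp.
of two non-adjacent vertices, is `ℤ/2`, resp. `D∞`.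

Conversely, squares commute in every such product, because the square of an element of `D∞` is a
rotation. If instead `u` is non-adjacent to two distinct vertices `v` and `w`, then `(uv)²` and
`(uw)²` do not commute, as a permutation representation of `C_Γ` shows.
-/

section Involutions

variable {G : Type*} [Group G]

theorem semiconjBy_mul_of_mul_self_eq_one {x y : G} (hx : x * x = 1) (hy : y * y = 1) :
    SemiconjBy x (x * y) (x * y)⁻¹ := by
  rw [SemiconjBy, mul_inv_rev, inv_eq_of_mul_eq_one_right hx, inv_eq_of_mul_eq_one_right hy,
    ← mul_assoc, hx, mul_assoc, hx, one_mul, mul_one]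

def ZMod.liftOfPowEqOne (n : ℕ) [NeZero n] (x : G) (hx : x ^ n = 1) :
    Multiplicative (ZMod n) →* G where
  toFun z := x ^ z.toAdd.val
  map_one' := by simp
  map_mul' a b := by rw [toAdd_mul, ZMod.val_add, ← pow_eq_pow_mod _ hx, pow_add]

@[simp] theorem ZMod.liftOfPowEqOne_apply (n : ℕ) [NeZero n] (x : G) (hx : x ^ n = 1)
    (z : Multiplicative (ZMod n)) : ZMod.liftOfPowEqOne n x hx z = x ^ z.toAdd.val :=
  rfl

theorem ZMod.liftOfPowEqOne_ofAdd_one (n : ℕ) [NeZero n] (x : G) (hx : x ^ n = 1) :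
    ZMod.liftOfPowEqOne n x hx (.ofAdd 1) = x := by
  rw [ZMod.liftOfPowEqOne_apply, toAdd_ofAdd, ZMod.val_one_eq_one_mod, ← pow_eq_pow_mod _ hx,
    pow_one]

namespace DihedralGroup

-- `ZMod 0` is definitionally `ℤ`, and `sr i = sr 0 * r i`, `r 1 = sr 0 * sr 1`.
def liftOfInvolutions (x y : G) (hx : x * x = 1) (hy : y * y = 1) : DihedralGroup 0 →* G where
  toFun
    | r i => (x * y) ^ (id i : ℤ)
    | sr i => x * (x * y) ^ (id i : ℤ)
  map_one' := zpow_zero _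
  map_mul' a b := by
    have key (k : ℤ) : x * (x * y) ^ k = (x * y) ^ (-k) * x := by
      rw [zpow_neg, ← inv_zpow]
      exact ((semiconjBy_mul_of_mul_self_eq_one hx hy).zpow_right k).eq
    have r_sr (i j : ℤ) : x * (x * y) ^ (j - i) = (x * y) ^ i * (x * (x * y) ^ j) := by
      rw [← mul_assoc, ← neg_neg i, ← key, neg_neg, mul_assoc, ← zpow_add, neg_add_eq_sub]
    have sr_r (i j : ℤ) : x * (x * y) ^ (i + j) = x * (x * y) ^ i * (x * y) ^ j := by
      rw [zpow_add, mul_assoc]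
    have sr_sr (i j : ℤ) : (x * y) ^ (j - i) = x * (x * y) ^ i * (x * (x * y) ^ j) := by
      rw [key, mul_assoc, ← mul_assoc x, hx, one_mul, ← zpow_add, neg_add_eq_sub]
    rcases a with i | i <;> rcases b with j | j
    exacts [zpow_add _ i j, r_sr i j, sr_r i j, sr_sr i j]

@[simp] theorem liftOfInvolutions_sr_zero (x y : G) (hx : x * x = 1) (hy : y * y = 1) :
    liftOfInvolutions x y hx hy (sr 0) = x :=
  (congrArg (x * ·) (zpow_zero _)).trans (mul_one x)

@[simp] theorem liftOfInvolutions_sr_one (x y : G) (hx : x * x = 1) (hy : y * y = 1) :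
    liftOfInvolutions x y hx hy (sr 1) = y :=
  show x * (x * y) ^ (1 : ℤ) = y by rw [zpow_one, ← mul_assoc, hx, one_mul]

variable {n : ℕ}

theorem hom_ext_sr {f g : DihedralGroup n →* G} (h0 : f (sr 0) = g (sr 0))
    (h1 : f (sr 1) = g (sr 1)) : f = g := by
  have hr1 : f (r 1) = g (r 1) := by
    rw [← sub_zero (1 : ZMod n), ← sr_mul_sr, map_mul, map_mul, h0, h1]
  have hr (i : ZMod n) : f (r i) = g (r i) := by
    rw [← ZMod.intCast_zmod_cast i, ← r_one_zpow, map_zpow, map_zpow, hr1]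
  ext (i | i)
  · exact hr i
  · rw [← zero_add i, ← sr_mul_r, map_mul, map_mul, h0, hr]

theorem commute_sq (d e : DihedralGroup n) : Commute (d ^ 2) (e ^ 2) := by
  have sq_eq_r (d : DihedralGroup n) : ∃ i, d ^ 2 = r i := by
    rcases d with i | i
    · exact ⟨i * 2, r_pow i 2⟩
    · exact ⟨0, by rw [pow_two, sr_mul_self, one_def]⟩
  obtain ⟨i, hi⟩ := sq_eq_r d
  obtain ⟨j, hj⟩ := sq_eq_r e
  rw [hi, hj, Commute, SemiconjBy, r_mul_r, r_mul_r, add_comm]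

end DihedralGroup

end Involutions

theorem commute_sq_prod_pi_dihedralGroup {ι κ A : Type*} [CommGroup A] {n : ℕ}
    (x y : (ι → A) × (κ → DihedralGroup n)) : Commute (x ^ 2) (y ^ 2) :=
  Prod.commute_iff.2 ⟨Commute.all _ _, Pi.commute_iff.2 fun _ => DihedralGroup.commute_sq _ _⟩

theorem exists_mulEquiv_pi_fin_prod {ι : Type*} [Finite ι] {H : ι → Type*}
    [∀ i, MulOneClass (H i)] {A B : Type*} [MulOneClass A] [MulOneClass B]
    (h : ∀ i, Nonempty (H i ≃* A) ∨ Nonempty (H i ≃* B)) :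
    ∃ a b : ℕ, Nonempty ((∀ i, H i) ≃* (Fin a → A) × (Fin b → B)) := by
  classical
  let p i := Nonempty (H i ≃* A)
  let split : (∀ i, H i) ≃* (∀ i : {i // p i}, H i) × (∀ i : {i // ¬p i}, H i) :=
    { Equiv.piEquivPiSubtypeProd p H with map_mul' := fun _ _ => rfl }
  exact ⟨_, _, ⟨split.trans <| .prodCongr
    ((MulEquiv.piCongrRight fun i : {i // p i} => i.2.some).trans
      (.arrowCongr (Finite.equivFin _) (.refl A)))
    ((MulEquiv.piCongrRight fun i : {i // ¬p i} => ((h i).resolve_left i.2).some).trans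
      (.arrowCongr (Finite.equivFin _) (.refl B)))⟩⟩

def SimpleGraph.nonAdjSetoid {V : Type*} (Γ : SimpleGraph V)
    (h : ∀ u v w : V, v ≠ u → w ≠ u → ¬Γ.Adj u v → ¬Γ.Adj u w → v = w) : Setoid V where
  r u v := ¬Γ.Adj u v
  iseqv.refl _ := Γ.irrefl
  iseqv.symm huv hvu := huv hvu.symm
  iseqv.trans {u v w} huv hvw := by
    by_cases hu : u = v
    · rwa [hu]
    by_cases hw : w = v
    · rwa [hw]
    obtain rfl := h v u w hu hw (fun h' => huv h'.symm) hvw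
    exact Γ.irrefl

namespace RACG

variable {V : Type*} {Γ : SimpleGraph V} {G : Type*} [Group G]

def of (v : V) : RACG Γ := PresentedGroup.of v

theorem of_mul_self (v : V) : (of v : RACG Γ) * of v = 1 :=
  PresentedGroup.one_of_mem (Or.inl ⟨v, rfl⟩)

theorem commute_of_adj {u v : V} (h : Γ.Adj u v) : Commute (of u : RACG Γ) (of v) := by
  have huv : (of u * of v : RACG Γ) ^ 2 = 1 := PresentedGroup.one_of_mem (Or.inr ⟨u, v, h, rfl⟩)
  have := inv_eq_of_mul_eq_one_right ((pow_two _).symm.trans huv)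
  rwa [mul_inv_rev, inv_eq_of_mul_eq_one_right (of_mul_self v),
    inv_eq_of_mul_eq_one_right (of_mul_self u), eq_comm] at this

def lift (f : V → G) (hsq : ∀ v, f v * f v = 1)
    (hcomm : ∀ u v, Γ.Adj u v → Commute (f u) (f v)) : RACG Γ →* G :=
  PresentedGroup.toGroup (f := f) <| by
    rintro r (⟨v, rfl⟩ | ⟨u, v, huv, rfl⟩)
    · simpa using hsq v
    · simp only [map_pow, map_mul, FreeGroup.lift_apply_of]
      rw [(hcomm u v huv).mul_pow, pow_two, pow_two, hsq, hsq, one_mul]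

@[simp] theorem lift_of (f : V → G) (hsq : ∀ v, f v * f v = 1)
    (hcomm : ∀ u v, Γ.Adj u v → Commute (f u) (f v)) (v : V) :
    lift f hsq hcomm (of v : RACG Γ) = f v :=
  PresentedGroup.toGroup.of _

@[ext] theorem hom_ext {φ ψ : RACG Γ →* G} (h : ∀ v, φ (of v) = ψ (of v)) : φ = ψ :=
  PresentedGroup.ext h

theorem commute_of_forall_commute_of {f : RACG Γ →* G} {g : G}
    (h : ∀ v, Commute (f (of v)) g) (x : RACG Γ) : Commute (f x) g := by
  have hle : Subgroup.closure (Set.range (of : V → RACG Γ)) ≤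
      (Subgroup.centralizer {g}).comap f :=
    (Subgroup.closure_le _).2 <| by
      rintro _ ⟨v, rfl⟩
      exact Subgroup.mem_centralizer_singleton_iff.2 (h v).eq
  exact Subgroup.mem_centralizer_singleton_iff.1
    (hle ((PresentedGroup.closure_range_of _).ge (Subgroup.mem_top x)))

def map {W : Type*} {Γ' : SimpleGraph W} (f : Γ' →g Γ) : RACG Γ' →* RACG Γ :=
  lift (fun w => of (f w)) (fun _ => of_mul_self _) fun _ _ h => commute_of_adj (f.map_adj h)

@[simp] theorem map_of {W : Type*} {Γ' : SimpleGraph W} (f : Γ' →g Γ) (w : W) :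
    map f (of w) = of (f w) :=
  lift_of _ _ _ w

section Join

variable {ι : Type*} [DecidableEq ι] (p : V → ι)

def toPi : RACG Γ →* ∀ i, RACG (Γ.induce {v | p v = i}) :=
  lift (fun v => Pi.mulSingle (p v) (of ⟨v, rfl⟩))
    (fun v => by rw [← Pi.mulSingle_mul, of_mul_self, Pi.mulSingle_one]) fun u v huv => by
      -- with the blocks as variables, `subst` can identify them when they coincide
      have key : ∀ i j (hu : p u = i) (hv : p v = j),
          Commute (Pi.mulSingle (M := fun k => RACG (Γ.induce {w | p w = k})) i (of ⟨u, hu⟩))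
            (Pi.mulSingle (M := fun k => RACG (Γ.induce {w | p w = k})) j (of ⟨v, hv⟩)) := by
        intro i j hu hv
        by_cases hij : i = j
        · subst hij
          exact (commute_of_adj (u := ⟨u, hu⟩) (v := ⟨v, hv⟩) huv).map
            (MonoidHom.mulSingle (fun k => RACG (Γ.induce {w | p w = k})) i)
        · exact Pi.mulSingle_commute hij _ _
      exact key _ _ rfl rfl

theorem toPi_of (v : V) :
    toPi p (of v : RACG Γ) =
      Pi.mulSingle (M := fun k => RACG (Γ.induce {w | p w = k})) (p v) (of ⟨v, rfl⟩) :=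
  lift_of _ _ _ v

def ofPi [Fintype ι] (hadj : ∀ u v, p u ≠ p v → Γ.Adj u v) :
    (∀ i, RACG (Γ.induce {v | p v = i})) →* RACG Γ :=
  MonoidHom.noncommPiCoprod (fun i => map (SimpleGraph.Embedding.induce _).toHom)
    fun i j hij x y => by
      refine commute_of_forall_commute_of (fun u => ?_) x
      refine (commute_of_forall_commute_of (fun w => ?_) y).symm
      rw [map_of, map_of]
      exact commute_of_adj (hadj _ _ fun h => hij (u.2.symm.trans (h.symm.trans w.2)))

theorem ofPi_mulSingle [Fintype ι] (hadj : ∀ u v, p u ≠ p v → Γ.Adj u v) (i : ι)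
    (x : RACG (Γ.induce {v | p v = i})) :
    ofPi p hadj (Pi.mulSingle i x) = map (SimpleGraph.Embedding.induce _).toHom x :=
  MonoidHom.noncommPiCoprod_mulSingle _ _ _

def piEquiv [Fintype ι] (hadj : ∀ u v, p u ≠ p v → Γ.Adj u v) :
    RACG Γ ≃* ∀ i, RACG (Γ.induce {v | p v = i}) :=
  MonoidHom.toMulEquiv (toPi p) (ofPi p hadj)
    (hom_ext fun v => by
      rw [MonoidHom.comp_apply, toPi_of, ofPi_mulSingle, map_of]
      rfl)
    (MonoidHom.pi_ext fun i x => by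
      rw [MonoidHom.comp_apply, ofPi_mulSingle, MonoidHom.id_apply]
      show ((toPi p).comp (map (SimpleGraph.Embedding.induce _).toHom)) x =
        MonoidHom.mulSingle _ i x
      congr 1
      refine hom_ext fun ⟨w, hw⟩ => ?_
      obtain rfl : p w = i := hw
      exact toPi_of p w)

end Join

def mulEquivZModTwo (a : V) (ha : ∀ v, v = a) : RACG Γ ≃* Multiplicative (ZMod 2) :=
  MonoidHom.toMulEquiv
    (lift (fun _ => .ofAdd 1) (fun _ => rfl) fun _ _ _ => Commute.all _ _)
    (ZMod.liftOfPowEqOne 2 (of a) (by rw [pow_two, of_mul_self]))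
    (hom_ext fun v => by
      rw [MonoidHom.comp_apply, lift_of, ZMod.liftOfPowEqOne_ofAdd_one, ha v, MonoidHom.id_apply])
    (MonoidHom.ext fun z => by
      rw [MonoidHom.comp_apply, ZMod.liftOfPowEqOne_apply, map_pow, lift_of, ← ofAdd_nsmul,
        nsmul_one, ZMod.natCast_zmod_val, ofAdd_toAdd, MonoidHom.id_apply])

def mulEquivDihedralGroup [DecidableEq V] (hΓ : Γ = ⊥) (a b : V) (hab : a ≠ b)
    (hV : ∀ v, v = a ∨ v = b) : RACG Γ ≃* DihedralGroup 0 :=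
  MonoidHom.toMulEquiv
    (lift (fun v => if v = a then .sr 0 else .sr 1)
      (fun v => by split_ifs <;> exact DihedralGroup.sr_mul_self _)
      fun u v h => by simp [hΓ] at h)
    (DihedralGroup.liftOfInvolutions (of a) (of b) (of_mul_self a) (of_mul_self b))
    (hom_ext fun v => by rcases hV v with rfl | rfl <;> simp [hab.symm])
    (DihedralGroup.hom_ext_sr (by simp) (by simp [hab.symm]))

theorem nonempty_mulEquiv_zmodTwo_or_dihedralGroup [Nonempty V] (hΓ : Γ = ⊥)
    (h : ∀ u v w : V, v ≠ u → w ≠ u → v = w) :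
    Nonempty (RACG Γ ≃* Multiplicative (ZMod 2)) ∨ Nonempty (RACG Γ ≃* DihedralGroup 0) := by
  classical
  obtain ⟨a⟩ := ‹Nonempty V›
  by_cases hb : ∃ b, b ≠ a
  · obtain ⟨b, hba⟩ := hb
    refine .inr ⟨mulEquivDihedralGroup hΓ a b hba.symm fun v => ?_⟩
    by_cases hva : v = a
    exacts [.inl hva, .inr (h a v b hva hba)]
  · push Not at hb
    exact .inl ⟨mulEquivZModTwo a hb⟩

theorem exists_mulEquiv_prod_of_atMostOneNonNeighbor [Finite V]
    (h : ∀ u v w : V, v ≠ u → w ≠ u → ¬Γ.Adj u v → ¬Γ.Adj u w → v = w) :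
    ∃ a b : ℕ, Nonempty (RACG Γ ≃*
      (Fin a → Multiplicative (ZMod 2)) × (Fin b → DihedralGroup 0)) := by
  classical
  let s := Γ.nonAdjSetoid h
  have : Fintype (Quotient s) := Fintype.ofFinite _
  have hadj (u v : V) (huv : ⟦u⟧ ≠ (⟦v⟧ : Quotient s)) : Γ.Adj u v :=
    not_not.1 fun h' => huv (Quotient.sound h')
  have hblock (i : Quotient s) :
      Nonempty (RACG (Γ.induce {v | ⟦v⟧ = i}) ≃* Multiplicative (ZMod 2)) ∨
        Nonempty (RACG (Γ.induce {v | ⟦v⟧ = i}) ≃* DihedralGroup 0) := by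
    have : Nonempty {v | ⟦v⟧ = i} := ⟨⟨i.out, Quotient.out_eq i⟩⟩
    have hna (u v : {v | ⟦v⟧ = i}) : ¬Γ.Adj u v := Quotient.exact (u.2.trans v.2.symm)
    refine nonempty_mulEquiv_zmodTwo_or_dihedralGroup ?_ fun u v w hvu hwu => ?_
    · ext u v
      exact iff_of_false (hna u v) id
    · exact Subtype.ext (h u v w (Subtype.coe_ne_coe.2 hvu) (Subtype.coe_ne_coe.2 hwu)
        (hna u v) (hna u w))
  obtain ⟨a, b, ⟨e⟩⟩ := exists_mulEquiv_pi_fin_prod hblock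
  exact ⟨a, b, ⟨(piEquiv _ hadj).trans e⟩⟩

theorem exists_not_commute_sq {u v w : V} (hvu : v ≠ u) (hwu : w ≠ u) (hvw : v ≠ w)
    (hv : ¬Γ.Adj u v) (hw : ¬Γ.Adj u w) : ∃ x y : RACG Γ, ¬Commute (x ^ 2) (y ^ 2) := by
  classical
  -- The images of `v` and `w` commute, so any edge between them is respected, while
  -- `(uv)²` and `(uw)²` go to non-commuting 3-cycles.
  let f : V → Equiv.Perm (Fin 4) := fun s =>
    if s = u then .swap 1 2 else if s = v then .swap 2 3 else if s = w then .swap 0 1 else 1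
  have hf_sq (s : V) : f s * f s = 1 := by
    simp only [f]; split_ifs <;> decide
  have hf_of_ne (s : V) (hs : s ≠ u) : f s = .swap 2 3 ∨ f s = .swap 0 1 ∨ f s = 1 := by
    simp only [f, if_neg hs]; split_ifs <;> simp
  have hf_one (s : V) (hsu : s ≠ u) (hsv : s ≠ v) (hsw : s ≠ w) : f s = 1 := by
    simp only [f, if_neg hsu, if_neg hsv, if_neg hsw]
  have hf_comm (s t : V) (hst : Γ.Adj s t) : Commute (f s) (f t) := by
    by_cases hs : s = u
    · subst hs
      rw [hf_one t (Γ.ne_of_adj hst).symm (fun h => hv (h ▸ hst)) (fun h => hw (h ▸ hst))]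
      exact Commute.one_right _
    by_cases ht : t = u
    · subst ht
      rw [hf_one s (Γ.ne_of_adj hst) (fun h => hv (h ▸ hst.symm)) (fun h => hw (h ▸ hst.symm))]
      exact Commute.one_left _
    rcases hf_of_ne s hs with h | h | h <;> rcases hf_of_ne t ht with h' | h' | h' <;>
      rw [h, h', commute_iff_eq] <;> decide
  refine ⟨of u * of v, of u * of w, fun h => ?_⟩
  have := h.map (lift f hf_sq hf_comm)
  simp only [map_pow, map_mul, lift_of, f, if_pos, if_neg hvu, if_neg hwu, if_neg hvw.symm] at this
  rw [commute_iff_eq] at this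
  exact absurd this (by decide)

end RACG

/-- Every vertex of `Γ` is non-adjacent to at most one other vertex iff `C_Γ` is a direct
product of copies of `ℤ/2` and of the infinite dihedral group. -/
theorem racg_decomposition_iff {V : Type} [Fintype V] (Γ : SimpleGraph V) :
    (∀ u v w : V, v ≠ u → w ≠ u → ¬Γ.Adj u v → ¬Γ.Adj u w → v = w) ↔
      ∃ a b : ℕ, Nonempty (RACG Γ ≃*
        (Fin a → Multiplicative (ZMod 2)) × (Fin b → DihedralGroup 0)) := by
  refine ⟨RACG.exists_mulEquiv_prod_of_atMostOneNonNeighbor, ?_⟩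
  rintro ⟨a, b, ⟨e⟩⟩ u v w hvu hwu hv hw
  by_contra hvw
  obtain ⟨x, y, hxy⟩ := RACG.exists_not_commute_sq hvu hwu hvw hv hw
  have := (commute_sq_prod_pi_dihedralGroup (e x) (e y)).map e.symm
  rw [← map_pow, ← map_pow, MulEquiv.symm_apply_apply, MulEquiv.symm_apply_apply] at this
  exact hxy this
end
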